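/- Under the matching-market dynamic pricing scheme, the following invariant holds by induction on t: if M_t denotes the partial matching formed by the first t arriving unit-demand agents each purchasing an item in their demand set under the computed prices (or nothing), and M_{>t} denotes a suitably chosen maximum-weight matching of the remaining agents and items, then SW(M_t) + SW(M_{>t}) = OPT for all t ∈ {0,1,…,n}; in particular the final welfare SW(M_n) equals OPT. -/

import Mathlib

/-!
By induction on `t` we keep a maximum-weight matching of the remaining agents and items.
The arriving agent `σ t` is matched in the maximum matching `μ t` chosen by the scheme: at most
`t` items are sold, all remaining ones are matched, and only `n - t - 1` other agents remain.
If she buys nothing, the price constraint `p(b) < v(b)` forces her partner item `b` to have value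
`≤ 0` for her, so she can be dropped. If she buys another item `b'`, the constraint on the edge
`⟨b, b'⟩` forces that edge onto a zero-weight cycle of the relation graph; splitting the cycle
into simple ones, each of nonnegative weight by maximality, and rotating the matching along the
one through `⟨b, b'⟩` gives a maximum matching in which she holds `b'`. Either way, removing her
leaves a maximum matching of what remains, and `SW(M_t) + SW(M_{>t})` does not change.
-/

section Stmt19

variable {I : Type*} [Fintype I] [DecidableEq I] {n : ℕ}

/-- A partial matching of agents to items: an `Option`-valued assignment, injective on the
agents that receive an item. -/
def PartialM (f : Fin n → Option I) : Prop :=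
  ∀ k k' : Fin n, ∀ b : I, f k = some b → f k' = some b → k = k'

/-- The social welfare of a partial matching. -/
def msw (v : Fin n → I → ℝ) (f : Fin n → Option I) : ℝ :=
  ∑ k, (f k).elim 0 (v k)

/-- The items sold before step `t`, given the purchases `z` (indexed by arrival position). -/
def soldBefore (z : Fin n → Option I) (t : ℕ) : Finset I :=
  (Finset.univ.filter (fun s : Fin n => (s : ℕ) < t)).biUnion (fun s => (z s).toFinset)

/-- `RemainMatching z σ t μ`: `μ` is a matching of the agents still to arrive at time `t`
(arrival order `σ`, purchases `z`) to items not yet sold before time `t`. -/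
def RemainMatching (z : Fin n → Option I) (σ : Equiv.Perm (Fin n)) (t : ℕ)
    (μ : Fin n → Option I) : Prop :=
  PartialM μ ∧
  (∀ s : Fin n, (s : ℕ) < t → μ (σ s) = none) ∧
  (∀ a : Fin n, ∀ b : I, μ a = some b → b ∉ soldBefore z t)

/-- `μ` matches *all* the items remaining at time `t`. -/
def MatchesAllRemaining (z : Fin n → Option I) (t : ℕ) (μ : Fin n → Option I) : Prop :=
  ∀ b : I, b ∉ soldBefore z t → ∃ a, μ a = some b

/-- The pair of items `(b, b')` lies on a directed cycle of total weight `0` of the relation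
graph associated with the matching `μ` (agents `ca j` matched to items `cb j`). -/
def OnZeroCycleM (v : Fin n → I → ℝ) (μ : Fin n → Option I) (b b' : I) : Prop :=
  ∃ (ℓ : ℕ) (ca : Fin (ℓ + 1) → Fin n) (cb : Fin (ℓ + 1) → I),
    (∀ j, μ (ca j) = some (cb j)) ∧
    (∑ j : Fin (ℓ + 1), (v (ca j) (cb j) - v (ca j) (cb (j + 1)))) = 0 ∧
    ∃ j : Fin (ℓ + 1), cb j = b ∧ cb (j + 1) = b'

end Stmt19

open Finset Function

section Matchings

variable {I : Type*} {n : ℕ}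

lemma msw_update (v : Fin n → I → ℝ) (f : Fin n → Option I) (x : Fin n) (w : Option I) :
    msw v (update f x w) = msw v f - (f x).elim 0 (v x) + w.elim 0 (v x) := by
  simp only [msw, ← add_sum_erase _ _ (mem_univ x), update_self]
  rw [sum_congr rfl fun k hk => by rw [update_of_ne (ne_of_mem_erase hk)]]
  ring

lemma PartialM.update {f : Fin n → Option I} (hf : PartialM f) {x : Fin n} {w : Option I}
    (hw : ∀ b, w = some b → ∀ y ≠ x, f y ≠ some b) : PartialM (update f x w) := by
  intro k k' b hk hk'
  rw [update_apply] at hk hk'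
  split_ifs at hk hk' with h h'
  · exact h.trans h'.symm
  · exact absurd hk' (hw b hk k' h')
  · exact absurd hk (hw b hk' k h)
  · exact hf k k' b hk hk'

/-- A closed walk `c 0 → c 1 → ⋯ → c L = c 0` of the relation graph of `M`: the agent `a i`
holds `c i` in `M`, and the edge `⟨c i, c (i + 1)⟩` has weight
`v (a i) (c i) - v (a i) (c (i + 1))`. -/
structure IsClosedWalk (M : Fin n → Option I) (a : ℕ → Fin n) (c : ℕ → I) (L : ℕ) : Prop where
  pos : 0 < L
  matched : ∀ i < L, M (a i) = some (c i)
  closed : c L = c 0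

def walkWeight (v : Fin n → I → ℝ) (a : ℕ → Fin n) (c : ℕ → I) (L : ℕ) : ℝ :=
  ∑ i ∈ range L, (v (a i) (c i) - v (a i) (c (i + 1)))

noncomputable def rotate (M : Fin n → Option I) (a : ℕ → Fin n) (c : ℕ → I) (L : ℕ)
    (x : Fin n) : Option I :=
  if h : ∃ i < L, a i = x then some (c (h.choose + 1)) else M x

lemma rotate_apply_of_not_exists {M : Fin n → Option I} {a : ℕ → Fin n} {c : ℕ → I} {L : ℕ}
    {x : Fin n} (hx : ¬∃ i < L, a i = x) : rotate M a c L x = M x :=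
  dif_neg hx

namespace IsClosedWalk

variable {M : Fin n → Option I} {a : ℕ → Fin n} {c : ℕ → I} {L : ℕ}

lemma injOn_agents (hw : IsClosedWalk M a c L) (hc : Set.InjOn c (Set.Iio L)) :
    Set.InjOn a (Set.Iio L) := by
  intro i hi j hj h
  refine hc hi hj (Option.some.inj ?_)
  rw [← hw.matched i hi, ← hw.matched j hj, h]

lemma exists_succ_eq (hw : IsClosedWalk M a c L) {i : ℕ} (hi : i < L) :
    ∃ j < L, c (i + 1) = c j := by
  rcases (Nat.succ_le_of_lt hi).lt_or_eq with h | h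
  · exact ⟨i + 1, h, rfl⟩
  · exact ⟨0, hw.pos, by rw [← hw.closed, ← h]⟩

lemma injOn_succ (hw : IsClosedWalk M a c L) (hc : Set.InjOn c (Set.Iio L)) :
    Set.InjOn (fun i => c (i + 1)) (Set.Iio L) := by
  intro i (hi : i < L) j (hj : j < L) (h : c (i + 1) = c (j + 1))
  have h0 : ∀ k, k + 1 < L → c (k + 1) ≠ c L := fun k hk hck =>
    absurd (hc (Set.mem_Iio.2 hk) (Set.mem_Iio.2 hw.pos) (hck.trans hw.closed)) k.succ_ne_zero
  rcases (Nat.succ_le_of_lt hi).lt_or_eq with hi' | hi' <;>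
    rcases (Nat.succ_le_of_lt hj).lt_or_eq with hj' | hj'
  · exact Nat.succ_injective (hc (Set.mem_Iio.2 hi') (Set.mem_Iio.2 hj') h)
  · exact absurd (h.trans (congrArg c hj')) (h0 i hi')
  · exact absurd (h.symm.trans (congrArg c hi')) (h0 j hj')
  · omega

lemma rotate_apply_of_lt (hw : IsClosedWalk M a c L) (hc : Set.InjOn c (Set.Iio L)) {i : ℕ}
    (hi : i < L) : rotate M a c L (a i) = some (c (i + 1)) := by
  have h : ∃ j < L, a j = a i := ⟨i, hi, rfl⟩
  rw [rotate, dif_pos h, hw.injOn_agents hc h.choose_spec.1 hi h.choose_spec.2]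

lemma matched_ne_none (hw : IsClosedWalk M a c L) {i : ℕ} (hi : i < L) : M (a i) ≠ none := by
  simp [hw.matched i hi]

lemma exists_eq_some_of_rotate (hw : IsClosedWalk M a c L) (hc : Set.InjOn c (Set.Iio L))
    {x : Fin n} {b : I} (hx : rotate M a c L x = some b) : ∃ y, M y = some b := by
  by_cases h : ∃ i < L, a i = x
  · obtain ⟨i, hi, rfl⟩ := h
    obtain ⟨j, hj, hij⟩ := hw.exists_succ_eq hi
    rw [hw.rotate_apply_of_lt hc hi, hij] at hx
    exact ⟨a j, hx ▸ hw.matched j hj⟩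
  · exact ⟨x, by rwa [rotate_apply_of_not_exists h] at hx⟩

lemma partialM_rotate (hw : IsClosedWalk M a c L) (hc : Set.InjOn c (Set.Iio L))
    (hM : PartialM M) : PartialM (rotate M a c L) := by
  have on_off : ∀ i < L, ∀ y, (¬∃ j < L, a j = y) → ∀ b,
      rotate M a c L (a i) = some b → rotate M a c L y = some b → False := by
    intro i hi y hy b hx hy'
    obtain ⟨j, hj, hij⟩ := hw.exists_succ_eq hi
    rw [hw.rotate_apply_of_lt hc hi, hij] at hx
    rw [rotate_apply_of_not_exists hy] at hy'
    exact hy ⟨j, hj, hM _ _ b (hx ▸ hw.matched j hj) hy'⟩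
  intro x y b hx hy
  by_cases hxw : ∃ i < L, a i = x <;> by_cases hyw : ∃ j < L, a j = y
  · obtain ⟨i, hi, rfl⟩ := hxw
    obtain ⟨j, hj, rfl⟩ := hyw
    rw [hw.rotate_apply_of_lt hc hi] at hx
    rw [hw.rotate_apply_of_lt hc hj] at hy
    exact congrArg a (hw.injOn_succ hc hi hj (Option.some.inj (hx.trans hy.symm)))
  · obtain ⟨i, hi, rfl⟩ := hxw
    exact (on_off i hi y hyw b hx hy).elim
  · obtain ⟨j, hj, rfl⟩ := hyw
    exact (on_off j hj x hxw b hy hx).elim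
  · rw [rotate_apply_of_not_exists hxw] at hx
    rw [rotate_apply_of_not_exists hyw] at hy
    exact hM x y b hx hy

lemma msw_rotate (v : Fin n → I → ℝ) (hw : IsClosedWalk M a c L)
    (hc : Set.InjOn c (Set.Iio L)) :
    msw v (rotate M a c L) = msw v M - walkWeight v a c L := by
  have hdiff : msw v (rotate M a c L) - msw v M =
      ∑ x ∈ (range L).image a, ((rotate M a c L x).elim 0 (v x) - (M x).elim 0 (v x)) := by
    rw [msw, msw, ← sum_sub_distrib]
    refine (sum_subset (subset_univ _) fun x _ hx => ?_).symm
    rw [rotate_apply_of_not_exists fun ⟨i, hi, h⟩ => hx (mem_image.2 ⟨i, mem_range.2 hi, h⟩),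
      sub_self]
  rw [sum_image fun i hi j hj h => hw.injOn_agents hc (mem_range.1 hi) (mem_range.1 hj) h,
    sum_congr rfl fun i hi => by
      rw [hw.rotate_apply_of_lt hc (mem_range.1 hi), hw.matched i (mem_range.1 hi)]] at hdiff
  have hweight : walkWeight v a c L =
      -∑ i ∈ range L, (v (a i) (c (i + 1)) - v (a i) (c i)) := by
    simp only [walkWeight, ← sum_neg_distrib, neg_sub]
  simp only [Option.elim_some] at hdiff
  linarith

end IsClosedWalk

/-- Index map of a walk from which the segment `[i, i + D)` has been cut out. -/
def skipIndex (i D p : ℕ) : ℕ := if p < i then p else p + D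

variable {M : Fin n → Option I} {a : ℕ → Fin n} {c : ℕ → I} {i D m : ℕ}

lemma comp_skipIndex_succ (hrep : c i = c (i + D)) (p : ℕ) :
    c (skipIndex i D (p + 1)) = c (skipIndex i D p + 1) := by
  unfold skipIndex
  rcases lt_trichotomy (p + 1) i with h | h | h
  · rw [if_pos h, if_pos (by omega)]
  · rw [if_neg h.not_lt, if_pos (by omega), h, hrep]
  · rw [if_neg (by omega), if_neg (by omega)]
    ring_nf

lemma walkWeight_split (v : Fin n → I → ℝ) (hrep : c i = c (i + D)) :
    walkWeight v a c (i + D + m) =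
      walkWeight v (fun p => a (i + p)) (fun p => c (i + p)) D +
      walkWeight v (a ∘ skipIndex i D) (c ∘ skipIndex i D) (i + m) := by
  set w : ℕ → ℝ := fun j => v (a j) (c j) - v (a j) (c (j + 1))
  have hA : walkWeight v (fun p => a (i + p)) (fun p => c (i + p)) D =
      ∑ p ∈ range D, w (i + p) := by
    simp only [walkWeight, w, add_assoc]
  have hB : walkWeight v (a ∘ skipIndex i D) (c ∘ skipIndex i D) (i + m) =
      ∑ p ∈ range i, w p + ∑ q ∈ range m, w (i + D + q) := by
    simp only [walkWeight, Function.comp, comp_skipIndex_succ hrep, sum_range_add]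
    congr 1
    · exact sum_congr rfl fun p hp => by simp [skipIndex, mem_range.1 hp, w]
    · exact sum_congr rfl fun q _ => by simp [skipIndex, w, add_right_comm i q D, add_assoc]
  have hAll : walkWeight v a c (i + D + m) =
      ∑ p ∈ range i, w p + ∑ p ∈ range D, w (i + p) + ∑ q ∈ range m, w (i + D + q) := by
    rw [walkWeight, sum_range_add, sum_range_add]
  rw [hA, hB, hAll]
  ring

namespace IsClosedWalk

lemma shift (hw : IsClosedWalk M a c (i + D + m)) (hD : 0 < D) (hrep : c i = c (i + D)) :
    IsClosedWalk M (fun p => a (i + p)) (fun p => c (i + p)) D where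
  pos := hD
  matched p hp := hw.matched (i + p) (by omega)
  closed := hrep.symm

lemma excise (hw : IsClosedWalk M a c (i + D + m)) (hm : 0 < m) (hrep : c i = c (i + D)) :
    IsClosedWalk M (a ∘ skipIndex i D) (c ∘ skipIndex i D) (i + m) where
  pos := by omega
  matched p hp := hw.matched _ (by unfold skipIndex; split_ifs <;> omega)
  closed := by
    simp only [Function.comp, skipIndex, if_neg (show ¬i + m < i by omega)]
    rw [show i + m + D = i + D + m by ring, hw.closed]
    split_ifs with h
    · rfl
    · obtain rfl : i = 0 := by omega
      exact hrep

end IsClosedWalk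

open Fin.NatCast in
lemma OnZeroCycleM.exists_isClosedWalk {v : Fin n → I → ℝ} {b b' : I} (h : OnZeroCycleM v M b b') :
    ∃ (L : ℕ) (a : ℕ → Fin n) (c : ℕ → I),
      IsClosedWalk M a c L ∧ walkWeight v a c L = 0 ∧ c 0 = b ∧ c 1 = b' := by
  obtain ⟨ℓ, ca, cb, hmatch, hsum, j, hj, hj'⟩ := h
  set w : Fin (ℓ + 1) → ℝ := fun k => v (ca k) (cb k) - v (ca k) (cb (k + 1))
  refine ⟨ℓ + 1, fun i => ca (j + i), fun i => cb (j + i),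
    ⟨ℓ.succ_pos, fun i _ => hmatch _, by simp⟩, ?_, by simpa using hj, by simpa using hj'⟩
  calc walkWeight v (fun i => ca (j + i)) (fun i => cb (j + i)) (ℓ + 1)
      = ∑ i ∈ range (ℓ + 1), w (j + i) := by simp [walkWeight, w, add_assoc]
    _ = ∑ k : Fin (ℓ + 1), w (j + k) := by
        rw [← Fin.sum_univ_eq_sum_range (fun i => w (j + i))]
        simp
    _ = 0 := by rw [← hsum]; exact Fintype.sum_equiv (Equiv.addLeft j) _ _ fun _ => rfl

lemma Fin.filter_val_lt_succ {t : ℕ} (tf : Fin n) (htf : (tf : ℕ) = t) :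
    univ.filter (fun s : Fin n => (s : ℕ) < t + 1) =
      insert tf (univ.filter (fun s : Fin n => (s : ℕ) < t)) := by
  ext s
  simp only [mem_filter, mem_univ, true_and, mem_insert, Fin.ext_iff]
  omega

def welfareBefore (v : Fin n → I → ℝ) (σ : Equiv.Perm (Fin n))
    (z : Fin n → Option I) (t : ℕ) : ℝ :=
  ∑ s ∈ univ.filter (fun s : Fin n => (s : ℕ) < t), (z s).elim 0 (v (σ s))

lemma welfareBefore_succ {t : ℕ} (v : Fin n → I → ℝ) (σ : Equiv.Perm (Fin n))
    (z : Fin n → Option I) (tf : Fin n) (htf : (tf : ℕ) = t) :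
    welfareBefore v σ z (t + 1) = welfareBefore v σ z t + (z tf).elim 0 (v (σ tf)) := by
  rw [welfareBefore, Fin.filter_val_lt_succ tf htf, sum_insert (by simp [htf]), add_comm,
    welfareBefore]

end Matchings

section Remaining

variable {I : Type*} [DecidableEq I] {n : ℕ} {v : Fin n → I → ℝ} {z : Fin n → Option I}
  {σ : Equiv.Perm (Fin n)} {t : ℕ} {M ν : Fin n → Option I}

lemma soldBefore_mono {t t' : ℕ} (h : t ≤ t') : soldBefore z t ⊆ soldBefore z t' :=
  biUnion_subset_biUnion_of_subset_left _ (monotone_filter_right _ fun _ _ hs => hs.trans_le h)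

lemma soldBefore_succ (tf : Fin n) (htf : (tf : ℕ) = t) :
    soldBefore z (t + 1) = (z tf).toFinset ∪ soldBefore z t := by
  rw [soldBefore, Fin.filter_val_lt_succ tf htf, biUnion_insert, soldBefore]

lemma card_soldBefore_le (z : Fin n → Option I) (t : ℕ) : #(soldBefore z t) ≤ t := by
  refine (card_biUnion_le_card_mul _ _ 1 fun s _ => ?_).trans ?_
  · cases z s <;> simp
  · rw [mul_one, Fin.card_filter_val_lt]
    exact min_le_right _ _

lemma remainMatching_zero {f : Fin n → Option I} (hf : PartialM f) : RemainMatching z σ 0 f :=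
  ⟨hf, fun _ hs => absurd hs (Nat.not_lt_zero _),
    fun _ _ _ hb => by simp [soldBefore] at hb⟩

namespace RemainMatching

lemma rotate {a : ℕ → Fin n} {c : ℕ → I} {L : ℕ} (hM : RemainMatching z σ t M)
    (hw : IsClosedWalk M a c L) (hc : Set.InjOn c (Set.Iio L)) :
    RemainMatching z σ t (rotate M a c L) := by
  refine ⟨hw.partialM_rotate hc hM.1, fun s hs => ?_, fun x b hx => ?_⟩
  · rw [rotate_apply_of_not_exists fun ⟨i, hi, h⟩ =>
      hw.matched_ne_none hi (h ▸ hM.2.1 s hs), hM.2.1 s hs]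
  · obtain ⟨y, hy⟩ := hw.exists_eq_some_of_rotate hc hx
    exact hM.2.2 y b hy

lemma update_none (hM : RemainMatching z σ t M) (x : Fin n) :
    RemainMatching z σ t (update M x none) := by
  refine ⟨hM.1.update fun _ h => absurd h (by simp), fun s hs => ?_, fun y b hy => ?_⟩
  · rw [update_apply]
    split_ifs
    exacts [rfl, hM.2.1 s hs]
  · rw [update_apply] at hy
    split_ifs at hy
    exact hM.2.2 y b hy

lemma succ (hM : RemainMatching z σ t M) (tf : Fin n) (htf : (tf : ℕ) = t)
    (hnone : M (σ tf) = none) (hz : ∀ x b, M x = some b → z tf ≠ some b) :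
    RemainMatching z σ (t + 1) M := by
  refine ⟨hM.1, fun s hs => ?_, fun x b hx => ?_⟩
  · rcases (Nat.le_of_lt_succ hs).lt_or_eq with hs | hs
    · exact hM.2.1 s hs
    · rwa [show s = tf from Fin.ext (hs.trans htf.symm)]
  · rw [soldBefore_succ tf htf, mem_union, Option.mem_toFinset, not_or]
    exact ⟨hz x b hx, hM.2.2 x b hx⟩

lemma update_purchase (hν : RemainMatching z σ (t + 1) ν) (tf : Fin n) (htf : (tf : ℕ) = t)
    (havail : ∀ b, z tf = some b → b ∉ soldBefore z t) :
    RemainMatching z σ t (update ν (σ tf) (z tf)) := by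
  have hsold : ∀ b, z tf = some b → b ∈ soldBefore z (t + 1) := fun b hb => by
    rw [soldBefore_succ tf htf, mem_union, Option.mem_toFinset]
    exact Or.inl hb
  refine ⟨hν.1.update fun b hb y _ hy => hν.2.2 y b hy (hsold b hb), fun s hs => ?_,
    fun x b hx => ?_⟩
  · have hne : σ s ≠ σ tf := fun h => by
      have := congrArg Fin.val (σ.injective h)
      omega
    rw [update_of_ne hne]
    exact hν.2.1 s (Nat.lt_succ_of_lt hs)
  · rw [update_apply] at hx
    split_ifs at hx
    · exact havail b hx
    · exact fun hb => hν.2.2 x b hx (soldBefore_mono (Nat.le_succ t) hb)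

lemma msw_eq_zero (hν : RemainMatching z σ n ν) (v : Fin n → I → ℝ) : msw v ν = 0 :=
  sum_eq_zero fun x _ => by
    rw [← σ.apply_symm_apply x, hν.2.1 _ (σ.symm x).isLt, Option.elim_none]

lemma exists_eq_some [Fintype I] (hcard : Fintype.card I = n) {tf : Fin n}
    (hM : RemainMatching z σ tf M) (hall : MatchesAllRemaining z tf M) :
    ∃ b, M (σ tf) = some b := by
  by_contra! hfree
  have hsurj : Set.SurjOn M ((Ioi tf).map σ.toEmbedding)
      ((univ \ soldBefore z tf).map Embedding.some) := by
    intro ob hob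
    obtain ⟨b, hb, rfl⟩ := mem_map.1 (mem_coe.1 hob)
    obtain ⟨x, hx⟩ := hall b (mem_sdiff.1 hb).2
    refine ⟨x, mem_map.2 ⟨σ.symm x, mem_Ioi.2 ?_, σ.apply_symm_apply x⟩, hx⟩
    rcases lt_trichotomy (σ.symm x) tf with h | h | h
    · have hnone := hM.2.1 _ h
      rw [σ.apply_symm_apply, hx] at hnone
      exact absurd hnone (Option.some_ne_none b)
    · exact absurd (by rw [← h, σ.apply_symm_apply, hx]) (hfree b)
    · exact h
  have hcount := card_le_card_of_surjOn M hsurj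
  rw [card_map, card_map, card_sdiff_of_subset (subset_univ _), card_univ, hcard,
    Fin.card_Ioi] at hcount
  have := card_soldBefore_le z tf
  omega

end RemainMatching

def IsMaxRemainMatching (v : Fin n → I → ℝ) (z : Fin n → Option I) (σ : Equiv.Perm (Fin n))
    (t : ℕ) (M : Fin n → Option I) : Prop :=
  RemainMatching z σ t M ∧ ∀ ν, RemainMatching z σ t ν → msw v ν ≤ msw v M

namespace IsMaxRemainMatching

lemma of_le (hM : IsMaxRemainMatching v z σ t M) (hν : RemainMatching z σ t ν)
    (h : msw v M ≤ msw v ν) : IsMaxRemainMatching v z σ t ν :=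
  ⟨hν, fun ν' hν' => (hM.2 ν' hν').trans h⟩

lemma msw_eq (hM : IsMaxRemainMatching v z σ t M) (hν : IsMaxRemainMatching v z σ t ν) :
    msw v M = msw v ν :=
  le_antisymm (hν.2 M hM.1) (hM.2 ν hν.1)

/-- A walk repeating an item splits into two shorter closed walks; one contains the first edge,
and the other has nonnegative weight since rotating it cannot beat the maximum. -/
lemma exists_rotate (hM : IsMaxRemainMatching v z σ t M) {L : ℕ} {a : ℕ → Fin n}
    {c : ℕ → I} (hw : IsClosedWalk M a c L) :
    ∃ M', RemainMatching z σ t M' ∧ M' (a 0) = some (c 1) ∧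
      msw v M - walkWeight v a c L ≤ msw v M' := by
  induction L using Nat.strong_induction_on generalizing a c with
  | _ L ih =>
  have nonneg : ∀ L' < L, ∀ {a' : ℕ → Fin n} {c' : ℕ → I}, IsClosedWalk M a' c' L' →
      0 ≤ walkWeight v a' c' L' := fun L' hL' a' c' hw' => by
    obtain ⟨M', hM', -, hle⟩ := ih L' hL' hw'
    linarith [hM.2 M' hM']
  by_cases hc : Set.InjOn c (Set.Iio L)
  · refine ⟨rotate M a c L, hM.1.rotate hw hc, hw.rotate_apply_of_lt hc hw.pos, ?_⟩
    rw [hw.msw_rotate v hc]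
  obtain ⟨i, j, hij, hjL, hrep⟩ : ∃ i j, i < j ∧ j < L ∧ c i = c j := by
    simp only [Set.InjOn, Set.mem_Iio, not_forall] at hc
    obtain ⟨i, hi, j, hj, hrep, hne⟩ := hc
    rcases Ne.lt_or_gt hne with h | h
    exacts [⟨i, j, h, hj, hrep⟩, ⟨j, i, h, hi, hrep.symm⟩]
  obtain ⟨D, rfl⟩ := Nat.exists_eq_add_of_le hij.le
  obtain ⟨m, rfl⟩ := Nat.exists_eq_add_of_le hjL.le
  have hsplit := walkWeight_split v (a := a) (m := m) hrep
  have hA := hw.shift (by omega) hrep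
  have hB := hw.excise (by omega) hrep
  rcases Nat.eq_zero_or_pos i with rfl | hi
  · obtain ⟨M', hM', h0, hle⟩ := ih D (by omega) hA
    simp only [zero_add] at h0
    exact ⟨M', hM', h0, by linarith [nonneg _ (by omega) hB]⟩
  · obtain ⟨M', hM', h0, hle⟩ := ih (i + m) (by omega) hB
    rw [Function.comp_apply, Function.comp_apply, comp_skipIndex_succ hrep,
      skipIndex, if_pos hi] at h0
    exact ⟨M', hM', h0, by linarith [nonneg _ (by omega) hA]⟩

lemma exists_of_onZeroCycleM (hM : IsMaxRemainMatching v z σ t M) {x : Fin n} {b b' : I}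
    (hx : M x = some b) (hcyc : OnZeroCycleM v M b b') :
    ∃ M', IsMaxRemainMatching v z σ t M' ∧ M' x = some b' := by
  obtain ⟨L, a, c, hw, hzero, hc0, hc1⟩ := hcyc.exists_isClosedWalk
  have ha0 : a 0 = x := hM.1.1 _ _ b (hc0 ▸ hw.matched 0 hw.pos) hx
  obtain ⟨M', hM', hM'x, hle⟩ := hM.exists_rotate hw
  rw [hzero, sub_zero] at hle
  exact ⟨M', hM.of_le hM' hle, ha0 ▸ hc1 ▸ hM'x⟩

lemma succ (hM : IsMaxRemainMatching v z σ t M) (tf : Fin n) (htf : (tf : ℕ) = t)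
    (hMz : M (σ tf) = z tf) : IsMaxRemainMatching v z σ (t + 1) (update M (σ tf) none) := by
  have havail : ∀ b, z tf = some b → b ∉ soldBefore z t := fun b hb => hM.1.2.2 _ b (hMz ▸ hb)
  refine ⟨(hM.1.update_none _).succ tf htf (update_self ..) fun x b hx hzb => ?_,
    fun ν hν => ?_⟩
  · rw [update_apply] at hx
    split_ifs at hx with h
    exact h (hM.1.1 x _ b hx (hMz.trans hzb))
  · have hle := hM.2 _ (hν.update_purchase tf htf havail)
    have hνtf : ν (σ tf) = none := hν.2.1 tf (by omega)
    rw [msw_update, hνtf] at hle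
    rw [msw_update, hMz]
    simp only [Option.elim_none] at hle ⊢
    linarith

lemma exists_eq_purchase [Fintype I] (hcard : Fintype.card I = n) {tf : Fin n}
    (hM : IsMaxRemainMatching v z σ tf M) (hall : MatchesAllRemaining z tf M) {p : I → ℝ}
    (hp2 : ∀ a : Fin n, ∀ b b' : I, M a = some b → b' ∉ soldBefore z (tf : ℕ) → b' ≠ b →
      ¬ OnZeroCycleM v M b b' → p b - p b' < v a b - v a b')
    (hp3 : ∀ a : Fin n, ∀ b : I, M a = some b → 0 < v a b → p b < v a b)
    (hnone : z tf = none → ∀ b' : I, b' ∉ soldBefore z (tf : ℕ) → v (σ tf) b' - p b' ≤ 0)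
    (hsome : ∀ b : I, z tf = some b → b ∉ soldBefore z (tf : ℕ) ∧
      ∀ b' : I, b' ∉ soldBefore z (tf : ℕ) → v (σ tf) b' - p b' ≤ v (σ tf) b - p b) :
    ∃ M', IsMaxRemainMatching v z σ tf M' ∧ M' (σ tf) = z tf := by
  obtain ⟨b, hb⟩ := hM.1.exists_eq_some hcard hall
  have hb_avail : b ∉ soldBefore z tf := hM.1.2.2 _ b hb
  rcases hzt : z tf with _ | b'
  · have hvb : v (σ tf) b ≤ 0 := by
      by_contra! hpos
      linarith [hnone hzt b hb_avail, hp3 _ _ hb hpos]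
    refine ⟨update M (σ tf) none, hM.of_le (hM.1.update_none _) ?_, update_self ..⟩
    rw [msw_update, hb]
    simp only [Option.elim_some, Option.elim_none]
    linarith
  · obtain ⟨hb'_avail, hbest⟩ := hsome b' hzt
    by_cases hbb : b' = b
    · exact ⟨M, hM, hbb ▸ hb⟩
    have hcyc : OnZeroCycleM v M b b' := by
      by_contra hnot
      linarith [hp2 _ _ _ hb hb'_avail hbb hnot, hbest b hb_avail]
    exact hM.exists_of_onZeroCycleM hb hcyc

end IsMaxRemainMatching

end Remaining

section Stmt19

variable {I : Type*} [Fintype I] [DecidableEq I] {n : ℕ}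

theorem stmt_19 (v : Fin n → I → ℝ)
    (hcard : Fintype.card I = n)
    (OPT : ℝ)
    (hOPTopt : ∃ f : Fin n → Option I, PartialM f ∧ msw v f = OPT)
    (hOPTmax : ∀ f : Fin n → Option I, PartialM f → msw v f ≤ OPT)
    (σ : Equiv.Perm (Fin n))
    (z : Fin n → Option I)
    (μ : Fin n → (Fin n → Option I))
    (hμ : ∀ t : Fin n, RemainMatching z σ (t : ℕ) (μ t) ∧
      MatchesAllRemaining z (t : ℕ) (μ t) ∧
      ∀ ν : Fin n → Option I, RemainMatching z σ (t : ℕ) ν → msw v ν ≤ msw v (μ t))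
    (pt : Fin n → I → ℝ)
    (hp2 : ∀ t : Fin n, ∀ a : Fin n, ∀ b b' : I, μ t a = some b →
      b' ∉ soldBefore z (t : ℕ) → b' ≠ b → ¬ OnZeroCycleM v (μ t) b b' →
      pt t b - pt t b' < v a b - v a b')
    (hp3 : ∀ t : Fin n, ∀ a : Fin n, ∀ b : I, μ t a = some b → 0 < v a b →
      pt t b < v a b)
    (hz : ∀ t : Fin n,
      match z t with
      | some b => b ∉ soldBefore z (t : ℕ) ∧ 0 ≤ v (σ t) b - pt t b ∧
          ∀ b' : I, b' ∉ soldBefore z (t : ℕ) → v (σ t) b' - pt t b' ≤ v (σ t) b - pt t b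
      | none => ∀ b' : I, b' ∉ soldBefore z (t : ℕ) → v (σ t) b' - pt t b' ≤ 0) :
    (∀ t : ℕ, t ≤ n → ∃ ν : Fin n → Option I,
      RemainMatching z σ t ν ∧
      (∀ ν' : Fin n → Option I, RemainMatching z σ t ν' → msw v ν' ≤ msw v ν) ∧
      (∑ s ∈ Finset.univ.filter (fun s : Fin n => (s : ℕ) < t),
          (z s).elim 0 (v (σ s))) + msw v ν = OPT) ∧
    ∑ s : Fin n, (z s).elim 0 (v (σ s)) = OPT := by
  have key : ∀ t ≤ n, ∃ ν,
      IsMaxRemainMatching v z σ t ν ∧ welfareBefore v σ z t + msw v ν = OPT := by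
    intro t ht
    induction t with
    | zero =>
      obtain ⟨f, hf, rfl⟩ := hOPTopt
      exact ⟨f, ⟨remainMatching_zero hf, fun ν hν => hOPTmax ν hν.1⟩, by simp [welfareBefore]⟩
    | succ t ih =>
      obtain ⟨ν, hν, hsum⟩ := ih (by omega)
      let tf : Fin n := ⟨t, ht⟩
      obtain ⟨hμrem, hμall, hμmax⟩ := hμ tf
      obtain ⟨M, hM, hMz⟩ := IsMaxRemainMatching.exists_eq_purchase hcard ⟨hμrem, hμmax⟩ hμall
        (hp2 tf) (hp3 tf) (fun h => by simpa [h] using hz tf)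
        (fun b h => by have hzb := hz tf; rw [h] at hzb; exact ⟨hzb.1, hzb.2.2⟩)
      refine ⟨update M (σ tf) none, hM.succ tf rfl hMz, ?_⟩
      rw [welfareBefore_succ v σ z tf rfl, msw_update, hMz, hM.msw_eq hν]
      simp only [Option.elim_none]
      linarith
  refine ⟨fun t ht => ?_, ?_⟩
  · obtain ⟨ν, ⟨hν, hνmax⟩, hsum⟩ := key t ht
    exact ⟨ν, hν, hνmax, hsum⟩
  · obtain ⟨ν, hν, hsum⟩ := key n le_rfl
    rwa [hν.1.msw_eq_zero, add_zero, welfareBefore, filter_true_of_mem fun s _ => s.isLt] at hsum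

end Stmt19
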